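/- Suppose u is an ultrafilter on ℕ possessing a base ⟨B_α : α < ω₁⟩ that is strictly ⊆*-decreasing, i.e., B_β ⊆* B_α and B_α\B_β is infinite whenever α < β < ω₁, and every member of u almost contains some B_α (B_α ⊆* A for some α whenever A ∈ u). Then there exists a bowtie of involutions ⟨f_α : α < ω₁⟩ whose domains satisfy D_α =* ℕ\B_α for every α < ω₁. Consequently, the existence of a P-point of character ℵ₁ implies the existence of a nontrivial automorphism of P(ω)/Fin. -/

import Mathlib

open Set

/-- The first uncountable ordinal `ω₁`. -/
noncomputable def omega1 : Ordinal := (Cardinal.aleph 1).ord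

/-- `A =* B` : the symmetric difference `(A \ B) ∪ (B \ A)` is finite. -/
def EqStar (A B : Set ℕ) : Prop := ((A \ B) ∪ (B \ A)).Finite

/-- `A ⊆* B` : `A \ B` is finite. -/
def SubStar (A B : Set ℕ) : Prop := (A \ B).Finite

/-- A bowtie of functions: a sequence `⟨f_α : α < ω₁⟩` where each `f_α` is a
fixed-point-free permutation of a set `D_α ⊆ ℕ`, satisfying conditions
(i), (ii), (iii) of the definition.  (The functions are represented as total
functions on `ℕ`; only their behavior on `D_α` matters.) -/
structure BowtieFn where
  /-- the domains `D_α` -/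
  D : Ordinal → Set ℕ
  /-- the functions `f_α` (total functions; only values on `D α` matter) -/
  f : Ordinal → ℕ → ℕ
  /-- each `f_α` is a permutation of `D_α` -/
  bijOn : ∀ α < omega1, Set.BijOn (f α) (D α) (D α)
  /-- each `f_α` is fixed-point-free on `D_α` -/
  fixedPointFree : ∀ α < omega1, ∀ x ∈ D α, f α x ≠ x
  /-- (i) `D_α ⊆* D_β` for `α < β < ω₁` -/
  sub : ∀ α β, α < β → β < omega1 → SubStar (D α) (D β)
  /-- (i) `D_β \ D_α` is infinite for `α < β < ω₁` -/
  diff_infinite : ∀ α β, α < β → β < omega1 → (D β \ D α).Infinite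
  /-- (ii) `f_α =* f_β ↾ D_α` for `α ≤ β < ω₁` -/
  coherent : ∀ α β, α ≤ β → β < omega1 → {x ∈ D α | f α x ≠ f β x}.Finite
  /-- (iii) every `A ⊆ ℕ` has a witness `δ_A < ω₁` -/
  guess : ∀ A : Set ℕ, ∃ δ, δ < omega1 ∧ ∀ α, δ ≤ α → α < omega1 →
      EqStar (f α '' ((D α \ D δ) ∩ A)) ((D α \ D δ) ∩ A) ∧
      EqStar (f α '' ((D α \ D δ) \ A)) ((D α \ D δ) \ A)

/-- A bowtie of involutions: a bowtie of functions in which every `f_α` is an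
involution of its domain `D_α`. -/
structure BowtieInv extends BowtieFn where
  /-- each `f_α` is an involution on `D_α` -/
  invol : ∀ α < omega1, ∀ x ∈ D α, f α (f α x) = x

/-- An automorphism of the Boolean algebra `P(ω)/Fin`, represented by a lifting
`Φ : Set ℕ → Set ℕ` acting on representatives: `Φ` is well defined, injective
and surjective modulo finite sets, and preserves the Boolean operations modulo
finite sets. -/
structure PωFinAuto where
  /-- the action on representatives -/
  Φ : Set ℕ → Set ℕ
  /-- well-definedness on `=*`-classes -/
  congr : ∀ A B : Set ℕ, EqStar A B → EqStar (Φ A) (Φ B)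
  /-- injectivity on `=*`-classes -/
  inj : ∀ A B : Set ℕ, EqStar (Φ A) (Φ B) → EqStar A B
  /-- surjectivity on `=*`-classes -/
  surj : ∀ B : Set ℕ, ∃ A : Set ℕ, EqStar (Φ A) B
  /-- preservation of unions -/
  map_union : ∀ A B : Set ℕ, EqStar (Φ (A ∪ B)) (Φ A ∪ Φ B)
  /-- preservation of complements -/
  map_compl : ∀ A : Set ℕ, EqStar (Φ Aᶜ) (Φ A)ᶜ

/-- A map on representatives induces a *trivial* automorphism of `P(ω)/Fin` if
there is an almost permutation `h` of `ℕ` (an injection on a cofinite set `dom`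
whose image is cofinite) with `Φ A =* h[A ∩ dom]` for all `A`. -/
def IsTrivial (Φ : Set ℕ → Set ℕ) : Prop :=
  ∃ (h : ℕ → ℕ) (dom : Set ℕ), (domᶜ : Set ℕ).Finite ∧
    ((h '' dom)ᶜ : Set ℕ).Finite ∧ Set.InjOn h dom ∧
    ∀ A : Set ℕ, EqStar (Φ A) (h '' (A ∩ dom))

/-!
The bowtie is built by transfinite recursion. At a countable stage `α`, the involutions `f_β`
along a cofinal `ω`-sequence below `α` are glued layer by layer into one fixed-point-free
involution of almost all of `ℕ \ B_α` that almost agrees with each of them. Property (iii) holds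
because if `B_δ ⊆* A` (or `B_δ ⊆* ℕ \ A`) then, for `α ≥ δ`, `D_α \ D_δ ⊆* B_δ` lies almost
inside `A` (or outside it) and is almost preserved by `f_α`.

A bowtie of involutions induces the automorphism `A ↦ σ_δ[A]` with `δ = δ_A`, where `σ_α` is
`f_α` extended by the identity: by (ii) and (iii), `σ_δ[A] =* σ_α[A]` for all `α ≥ δ_A`, so on
finitely many sets it is induced by a single involution of `ℕ`. If it were induced by an almost
permutation `h`, then `h =* f_α` on every `D_α`, so `{x | x < h x}` would split almost every pair
`{x, f_α x}`; this contradicts (iii) on the infinite set `D_{δ+1} \ D_δ`.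
-/

open Function

theorem eqStar_iff_eventuallyEq {A B : Set ℕ} : EqStar A B ↔ A =ᶠ[Filter.cofinite] B := by
  rw [Filter.eventuallyEq_set, Filter.eventually_cofinite, EqStar]
  congr! 1
  ext x
  simp only [mem_union, mem_sdiff, mem_ofPred_eq]
  tauto

namespace EqStar

variable {A B C A' B' : Set ℕ}

protected theorem refl (A : Set ℕ) : EqStar A A := by simp [EqStar]

protected theorem symm (h : EqStar A B) : EqStar B A := by
  rwa [EqStar, union_comm]

protected theorem trans (h₁ : EqStar A B) (h₂ : EqStar B C) : EqStar A C :=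
  eqStar_iff_eventuallyEq.2 ((eqStar_iff_eventuallyEq.1 h₁).trans (eqStar_iff_eventuallyEq.1 h₂))

protected theorem union (h₁ : EqStar A A') (h₂ : EqStar B B') : EqStar (A ∪ B) (A' ∪ B') :=
  eqStar_iff_eventuallyEq.2 ((eqStar_iff_eventuallyEq.1 h₁).union (eqStar_iff_eventuallyEq.1 h₂))

protected theorem sdiff (h₁ : EqStar A A') (h₂ : EqStar B B') : EqStar (A \ B) (A' \ B') :=
  eqStar_iff_eventuallyEq.2 ((eqStar_iff_eventuallyEq.1 h₁).diff (eqStar_iff_eventuallyEq.1 h₂))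

protected theorem compl (h : EqStar A B) : EqStar Aᶜ Bᶜ :=
  eqStar_iff_eventuallyEq.2 (eqStar_iff_eventuallyEq.1 h).compl

theorem subStar (h : EqStar A B) : SubStar A B := h.subset subset_union_left

theorem of_subset (h : A ⊆ B) (hBA : (B \ A).Finite) : EqStar A B := by
  rwa [EqStar, sdiff_eq_empty.2 h, empty_union]

theorem of_finite (hA : A.Finite) (hB : B.Finite) : EqStar A B :=
  (hA.subset sdiff_subset).union (hB.subset sdiff_subset)

theorem finite (h : EqStar A B) (hB : B.Finite) : A.Finite :=
  (h.subStar.union hB).subset (by rw [sdiff_union_self]; exact subset_union_left)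

theorem finite_of_disjoint (h : EqStar A B) (hAB : Disjoint A B) : A.Finite :=
  hAB.sdiff_eq_left ▸ h.subStar

theorem image (f : ℕ → ℕ) (h : EqStar A B) : EqStar (f '' A) (f '' B) := by
  have key : ∀ X Y : Set ℕ, f '' X \ f '' Y ⊆ f '' (X \ Y) := fun X Y =>
    sdiff_subset_iff.2 <| by
      rw [← image_union, union_sdiff_self]
      exact image_mono subset_union_right
  exact ((h.subStar.image f).union (h.symm.subStar.image f)).subset
    (union_subset_union (key A B) (key B A))

theorem of_image {f : ℕ → ℕ} (hf : Injective f) (h : EqStar (f '' A) (f '' B)) : EqStar A B := by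
  rw [EqStar, ← image_sdiff hf, ← image_sdiff hf, ← image_union] at h
  exact h.of_finite_image hf.injOn

theorem image_self_of_eqStar {f : ℕ → ℕ} (hA : EqStar A A') (h : EqStar (f '' A) A) :
    EqStar (f '' A') A' :=
  (hA.symm.image f).trans (h.trans hA)

end EqStar

def AlmostEqOn (f g : ℕ → ℕ) (S : Set ℕ) : Prop := {x ∈ S | f x ≠ g x}.Finite

namespace AlmostEqOn

variable {f g k : ℕ → ℕ} {S T : Set ℕ}

protected theorem refl (f : ℕ → ℕ) (S : Set ℕ) : AlmostEqOn f f S := by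
  simp [AlmostEqOn]

protected theorem trans (h₁ : AlmostEqOn f g S) (h₂ : AlmostEqOn g k S) : AlmostEqOn f k S :=
  (h₁.union h₂).subset fun x ⟨hx, hne⟩ => by
    by_cases hfg : f x = g x
    · exact Or.inr ⟨hx, hfg ▸ hne⟩
    · exact Or.inl ⟨hx, hfg⟩

theorem mono (h : AlmostEqOn f g T) (hST : S ⊆ T) : AlmostEqOn f g S :=
  h.subset fun _ hx => ⟨hST hx.1, hx.2⟩

theorem of_subStar (h : AlmostEqOn f g T) (hST : SubStar S T) : AlmostEqOn f g S :=
  (hST.union h).subset fun x ⟨hx, hne⟩ => by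
    by_cases hxT : x ∈ T
    exacts [Or.inr ⟨hxT, hne⟩, Or.inl ⟨hx, hxT⟩]

theorem eqStar_image (h : AlmostEqOn f g S) : EqStar (f '' S) (g '' S) := by
  refine ((h.image f).union (h.image g)).subset ?_
  rintro _ (⟨⟨x, hx, rfl⟩, hg⟩ | ⟨⟨x, hx, rfl⟩, hf⟩)
  · exact Or.inl ⟨x, ⟨hx, fun he => hg ⟨x, hx, he.symm⟩⟩, rfl⟩
  · exact Or.inr ⟨x, ⟨hx, fun he => hf ⟨x, hx, he⟩⟩, rfl⟩

theorem eqStar_inter_lt (h : AlmostEqOn f g S) :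
    EqStar (S ∩ {x | x < f x}) (S ∩ {x | x < g x}) :=
  h.subset <| by
    rintro x (⟨⟨hx, hf⟩, hg⟩ | ⟨⟨hx, hg⟩, hf⟩)
    exacts [⟨hx, fun he => hg ⟨hx, show x < g x from he ▸ hf⟩⟩,
      ⟨hx, fun he => hf ⟨hx, show x < f x from he ▸ hg⟩⟩]

end AlmostEqOn

def IsFPFInvolOn (f : ℕ → ℕ) (S : Set ℕ) : Prop := ∀ x ∈ S, f x ∈ S ∧ f (f x) = x ∧ f x ≠ x

namespace IsFPFInvolOn

variable {f g : ℕ → ℕ} {S T : Set ℕ}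

theorem bijOn (h : IsFPFInvolOn f S) : BijOn f S S :=
  ⟨fun x hx => (h x hx).1, fun x hx y hy hxy => by rw [← (h x hx).2.1, hxy, (h y hy).2.1],
    fun x hx => ⟨f x, (h x hx).1, (h x hx).2.1⟩⟩

theorem piecewise [DecidablePred (· ∈ S)] (hf : IsFPFInvolOn f S) (hg : IsFPFInvolOn g T)
    (hST : Disjoint S T) : IsFPFInvolOn (S.piecewise f g) (S ∪ T) := by
  rintro x (hx | hx)
  · obtain ⟨hfx, hffx, hne⟩ := hf x hx
    rw [piecewise_eq_of_mem _ _ _ hx, piecewise_eq_of_mem _ _ _ hfx]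
    exact ⟨Or.inl hfx, hffx, hne⟩
  · obtain ⟨hgx, hggx, hne⟩ := hg x hx
    rw [piecewise_eq_of_notMem _ _ _ (hST.notMem_of_mem_right hx),
      piecewise_eq_of_notMem _ _ _ (hST.notMem_of_mem_right hgx)]
    exact ⟨Or.inr hgx, hggx, hne⟩

theorem exists_iUnion {ι : Type*} {S : ι → Set ℕ} (hS : Pairwise (Disjoint on S))
    {g : ι → ℕ → ℕ} (hg : ∀ i, IsFPFInvolOn (g i) (S i)) :
    ∃ f, IsFPFInvolOn f (⋃ i, S i) ∧ ∀ i, ∀ x ∈ S i, f x = g i x := by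
  classical
  have hunique : ∀ {i j x}, x ∈ S i → x ∈ S j → i = j := fun hi hj =>
    by_contra fun hij => disjoint_left.1 (hS hij) hi hj
  let f x := if h : ∃ i, x ∈ S i then g h.choose x else x
  have hf : ∀ i, ∀ x ∈ S i, f x = g i x := fun i x hx => by
    have h : ∃ i, x ∈ S i := ⟨i, hx⟩
    simp only [f, dif_pos h, hunique h.choose_spec hx]
  refine ⟨f, fun x hx => ?_, hf⟩
  obtain ⟨i, hi⟩ := mem_iUnion.1 hx
  obtain ⟨hgx, hggx, hne⟩ := hg i x hi
  rw [hf i x hi, hf i _ hgx]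
  exact ⟨mem_iUnion.2 ⟨i, hgx⟩, hggx, hne⟩

end IsFPFInvolOn

/-- Swap the `2k`-th and `(2k+1)`-st elements of `S`. -/
theorem exists_isFPFInvolOn_of_infinite {S : Set ℕ} (hS : S.Infinite) :
    ∃ f, IsFPFInvolOn f S := by
  classical
  have hS' : {x | x ∈ S}.Infinite := hS
  refine ⟨fun x => Nat.nth (· ∈ S) (Nat.count (· ∈ S) x ^^^ 1), fun x hx =>
    ⟨Nat.nth_mem_of_infinite hS' _, ?_, fun h => ?_⟩⟩
  · simp only [Nat.count_nth_of_infinite hS', Nat.xor_assoc, Nat.xor_self, Nat.xor_zero]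
    exact Nat.nth_count (p := (· ∈ S)) hx
  · have := congrArg (· ^^^ Nat.count (· ∈ S) x) (Nat.count_nth_of_infinite hS' _ ▸
      congrArg (Nat.count (· ∈ S)) h)
    simp at this

theorem exists_isFPFInvolOn_cofinite_subset (S : Set ℕ) :
    ∃ S' ⊆ S, (S \ S').Finite ∧ ∃ f, IsFPFInvolOn f S' := by
  rcases S.finite_or_infinite with hS | hS
  · exact ⟨∅, empty_subset S, by rwa [sdiff_empty], id, fun _ hx => hx.elim⟩
  · exact ⟨S, subset_rfl, by simp, exists_isFPFInvolOn_of_infinite hS⟩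

namespace Amalgamation

variable (D : Set ℕ) (Dn : ℕ → Set ℕ) (fn : ℕ → ℕ → ℕ)

def layerOver (P : Set ℕ) (n : ℕ) : Set ℕ := {x | x ∈ (D ∩ Dn n) \ P ∧ fn n x ∈ (D ∩ Dn n) \ P}

def stage : ℕ → Set ℕ
  | 0 => ∅
  | n + 1 => stage n ∪ layerOver D Dn fn (stage n) n

def layer (n : ℕ) : Set ℕ := layerOver D Dn fn (stage D Dn fn n) n

variable {D Dn fn}

theorem stage_succ (n : ℕ) : stage D Dn fn (n + 1) = stage D Dn fn n ∪ layer D Dn fn n := rfl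

theorem stage_mono : Monotone (stage D Dn fn) :=
  monotone_nat_of_le_succ fun _ => subset_union_left

theorem layer_subset_stage {m n : ℕ} (h : m < n) : layer D Dn fn m ⊆ stage D Dn fn n :=
  subset_union_right.trans (stage_mono h)

theorem layer_subset (n : ℕ) : layer D Dn fn n ⊆ D ∩ Dn n := fun _ hx => hx.1.1

theorem pairwise_disjoint_layer : Pairwise (Disjoint on layer D Dn fn) :=
  (pairwise_disjoint_on _).2 fun _ _ h =>
    disjoint_left.2 fun _ hm hn => hn.1.2 (layer_subset_stage h hm)

theorem mem_stage_iff {n x : ℕ} : x ∈ stage D Dn fn n ↔ ∃ m < n, x ∈ layer D Dn fn m := by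
  induction n with
  | zero => simp [stage]
  | succ n ih =>
    rw [stage_succ, mem_union, ih]
    constructor
    · rintro (⟨m, hm, hx⟩ | hx)
      exacts [⟨m, by omega, hx⟩, ⟨n, by omega, hx⟩]
    · rintro ⟨m, hm, hx⟩
      rcases Nat.lt_succ_iff_lt_or_eq.1 hm with hm | rfl
      exacts [Or.inl ⟨m, hm, hx⟩, Or.inr hx]

theorem isFPFInvolOn_layer {n : ℕ} (hf : IsFPFInvolOn (fn n) (Dn n)) :
    IsFPFInvolOn (fn n) (layer D Dn fn n) := fun x hx => by
  obtain ⟨-, hinv, hne⟩ := hf x hx.1.1.2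
  exact ⟨⟨hx.2, hinv.symm ▸ hx.1⟩, hinv, hne⟩

/-- A point of `D ∩ Dn n` left out of the first `n + 1` layers has an `fn n`-partner outside `D`
or inside an earlier layer `m`, where `fn m` and `fn n` then disagree at that partner. -/
theorem finite_inter_sdiff_stage {n : ℕ} (hD : SubStar (Dn n) D)
    (hf : ∀ m, IsFPFInvolOn (fn m) (Dn m)) (hcoh : ∀ m < n, AlmostEqOn (fn m) (fn n) (Dn m)) :
    ((D ∩ Dn n) \ stage D Dn fn (n + 1)).Finite := by
  refine ((hD.union (Finite.biUnion (finite_lt_nat n) hcoh)).image (fn n)).subset ?_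
  rintro x ⟨⟨hxD, hxn⟩, hx⟩
  obtain ⟨hy, hinv, -⟩ := hf n x hxn
  rw [stage_succ, mem_union, not_or] at hx
  refine ⟨fn n x, ?_, hinv⟩
  by_cases hyD : fn n x ∈ D
  · have hys : fn n x ∈ stage D Dn fn n := by
      by_contra hys
      exact hx.2 ⟨⟨⟨hxD, hxn⟩, hx.1⟩, ⟨hyD, hy⟩, hys⟩
    obtain ⟨m, hm, hym⟩ := mem_stage_iff.1 hys
    refine Or.inr (mem_biUnion hm ⟨(layer_subset m hym).2, fun he => hx.1 ?_⟩)
    rw [← hinv, ← he]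
    exact layer_subset_stage hm (isFPFInvolOn_layer (hf m) _ hym).1
  · exact Or.inl ⟨hy, hyD⟩

end Amalgamation

open Amalgamation in
theorem exists_isFPFInvolOn_amalgamation (D : Set ℕ) (Dn : ℕ → Set ℕ) (fn : ℕ → ℕ → ℕ)
    (hD : ∀ n, SubStar (Dn n) D) (hf : ∀ n, IsFPFInvolOn (fn n) (Dn n))
    (hcoh : ∀ m n, m ≤ n → AlmostEqOn (fn m) (fn n) (Dn m)) :
    ∃ D' ⊆ D, (D \ D').Finite ∧ ∃ f, IsFPFInvolOn f D' ∧ ∀ n, AlmostEqOn (fn n) f (Dn n) := by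
  classical
  obtain ⟨g, hg, hgL⟩ := IsFPFInvolOn.exists_iUnion pairwise_disjoint_layer
    fun n => isFPFInvolOn_layer (D := D) (hf n)
  set U := ⋃ n, layer D Dn fn n
  have hUD : U ⊆ D := iUnion_subset fun n => (layer_subset n).trans inter_subset_left
  obtain ⟨R, hRU, hRfin, r, hr⟩ := exists_isFPFInvolOn_cofinite_subset (D \ U)
  refine ⟨U ∪ R, union_subset hUD (hRU.trans sdiff_subset), by rwa [← sdiff_sdiff],
    U.piecewise g r, hg.piecewise hr (disjoint_left.2 fun _ hx hR => (hRU hR).2 hx), fun n => ?_⟩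
  -- `fn n` can disagree with the glued map only off `D`, off the first `n + 1` layers, or on a
  -- layer `m ≤ n`, where the glued map is `fn m`.
  refine (((hD n).union (finite_inter_sdiff_stage (hD n) hf fun m hm => hcoh m n hm.le)).union
    (Finite.biUnion (finite_le_nat n) fun m hm => hcoh m n hm)).subset ?_
  rintro x ⟨hxn, hne⟩
  by_cases hxD : x ∈ D
  · by_cases hxs : x ∈ stage D Dn fn (n + 1)
    · obtain ⟨m, hm, hxm⟩ := mem_stage_iff.1 hxs
      rw [piecewise_eq_of_mem _ _ _ (mem_iUnion.2 ⟨m, hxm⟩), hgL m x hxm] at hne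
      exact Or.inr (mem_biUnion (Nat.lt_succ_iff.1 hm) ⟨(layer_subset m hxm).2, Ne.symm hne⟩)
    · exact Or.inl (Or.inr ⟨⟨hxD, hxn⟩, hxs⟩)
  · exact Or.inl (Or.inl ⟨hxn, hxD⟩)

theorem countable_Iio_of_lt_omega1 {α : Ordinal} (h : α < omega1) : (Iio α).Countable := by
  rw [← Cardinal.le_aleph0_iff_set_countable, Cardinal.mk_Iio_ordinal, Cardinal.lift_le_aleph0,
    ← Cardinal.lt_aleph_one_iff]
  exact Cardinal.lt_ord.1 h

theorem succ_lt_omega1 {α : Ordinal} (h : α < omega1) : Order.succ α < omega1 :=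
  (Cardinal.isSuccLimit_ord (Cardinal.aleph0_le_aleph 1)).succ_lt h

theorem exists_monotone_cofinal_of_lt_omega1 {α : Ordinal} (h : α < omega1) (h0 : α ≠ 0) :
    ∃ c : ℕ → Ordinal, Monotone c ∧ (∀ n, c n < α) ∧ ∀ β < α, ∃ n, β ≤ c n := by
  obtain ⟨s, hs⟩ := (Set.countable_iff_exists_surjective (s := Iio α) ⟨0, pos_iff_ne_zero.2 h0⟩).1
    (countable_Iio_of_lt_omega1 h)
  refine ⟨fun n => partialSups s n, fun m n hmn => (partialSups s).monotone hmn,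
    fun n => (partialSups s n).2, fun β hβ => ?_⟩
  obtain ⟨n, hn⟩ := hs ⟨β, hβ⟩
  exact ⟨n, (congrArg Subtype.val hn).ge.trans (le_partialSups s n)⟩

theorem exists_seq_of_forall_extend {ι X : Type*} [LinearOrder ι] [WellFoundedLT ι] [Nonempty X]
    (o : ι) (Q : ι → X → Prop) (R : X → X → Prop) (hR : ∀ x, R x x)
    (h : ∀ α < o, ∀ s : ι → X, (∀ β < α, Q β (s β)) →
      (∀ β γ, β ≤ γ → γ < α → R (s β) (s γ)) → ∃ x, Q α x ∧ ∀ β < α, R (s β) x) :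
    ∃ s : ι → X, (∀ α < o, Q α (s α)) ∧ ∀ β α, β ≤ α → α < o → R (s β) (s α) := by
  let s : ι → X := wellFounded_lt.fix fun α prev =>
    Classical.epsilon fun x => Q α x ∧ ∀ β (hβ : β < α), R (prev β hβ) x
  have hs (α : ι) : s α = Classical.epsilon fun x => Q α x ∧ ∀ β < α, R (s β) x :=
    wellFounded_lt.fix_eq _ α
  have key (α : ι) : α < o → Q α (s α) ∧ ∀ β ≤ α, R (s β) (s α) := by
    induction α using WellFoundedLT.induction with
    | _ α ih =>
      intro hα
      have hext := Classical.epsilon_spec (h α hα s (fun β hβ => (ih β hβ (hβ.trans hα)).1)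
        fun β γ hβγ hγ => (ih γ hγ (hγ.trans hα)).2 β hβγ)
      rw [← hs α] at hext
      exact ⟨hext.1, fun β hβ => hβ.eq_or_lt.elim (fun h => h ▸ hR _) (hext.2 β)⟩
  exact ⟨s, fun α hα => (key α hα).1, fun β α hβ hα => (key α hα).2 β hβ⟩

theorem eqStar_image_sdiff {f g : ℕ → ℕ} {S T : Set ℕ} (hf : BijOn f S S) (hg : BijOn g T T)
    (hST : SubStar S T) (hfg : AlmostEqOn f g S) : EqStar (g '' (T \ S)) (T \ S) := by
  have hTS : EqStar (T ∩ S) S := EqStar.of_subset inter_subset_right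
    (hST.subset fun x ⟨hxS, hx⟩ => ⟨hxS, fun hxT => hx ⟨hxT, hxS⟩⟩)
  have hinter : EqStar (g '' (T ∩ S)) (T ∩ S) := by
    refine ((hfg.mono inter_subset_right).eqStar_image.symm.trans (hTS.image f)).trans ?_
    rw [hf.image_eq]
    exact hTS.symm
  rw [← sdiff_self_inter, hg.injOn.image_sdiff_subset inter_subset_left, hg.image_eq]
  exact (EqStar.refl T).sdiff hinter

theorem eqStar_image_inter_of_finite_sdiff {f : ℕ → ℕ} {X A : Set ℕ} (hX : EqStar (f '' X) X)
    (hA : (X \ A).Finite) :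
    EqStar (f '' (X ∩ A)) (X ∩ A) ∧ EqStar (f '' (X \ A)) (X \ A) := by
  have hXA : EqStar (X ∩ A) X := EqStar.of_subset inter_subset_left (by rwa [sdiff_self_inter])
  exact ⟨((hXA.image f).trans hX).trans hXA.symm, EqStar.of_finite (hA.image f) hA⟩

theorem guess_of_base (u : Ultrafilter ℕ) {Bse D : Ordinal → Set ℕ} {f : Ordinal → ℕ → ℕ}
    (hbase : ∀ A : Set ℕ, A ∈ u → ∃ α < omega1, SubStar (Bse α) A)
    (hD : ∀ α < omega1, EqStar (D α) (Bse α)ᶜ)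
    (hbij : ∀ α < omega1, BijOn (f α) (D α) (D α))
    (hsub : ∀ β α, β ≤ α → α < omega1 → SubStar (D β) (D α))
    (hcoh : ∀ β α, β ≤ α → α < omega1 → AlmostEqOn (f β) (f α) (D β)) (A : Set ℕ) :
    ∃ δ, δ < omega1 ∧ ∀ α, δ ≤ α → α < omega1 →
      EqStar (f α '' ((D α \ D δ) ∩ A)) ((D α \ D δ) ∩ A) ∧
      EqStar (f α '' ((D α \ D δ) \ A)) ((D α \ D δ) \ A) := by
  have key : ∀ C ∈ u, ∃ δ < omega1, ∀ α, δ ≤ α → α < omega1 →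
      EqStar (f α '' (D α \ D δ)) (D α \ D δ) ∧ ((D α \ D δ) \ C).Finite := by
    intro C hC
    obtain ⟨δ, hδ, hδC⟩ := hbase C hC
    refine ⟨δ, hδ, fun α hδα hα => ⟨eqStar_image_sdiff (hbij δ hδ) (hbij α hα)
      (hsub δ α hδα hα) (hcoh δ α hδα hα), ?_⟩⟩
    refine (((hD δ hδ).compl.sdiff (EqStar.refl C)).finite ?_).subset
      fun x ⟨⟨_, hx⟩, hxC⟩ => ⟨hx, hxC⟩
    rwa [compl_compl]
  rcases u.mem_or_compl_mem A with hA | hA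
  · obtain ⟨δ, hδ, h⟩ := key A hA
    exact ⟨δ, hδ, fun α h₁ h₂ => eqStar_image_inter_of_finite_sdiff (h α h₁ h₂).1 (h α h₁ h₂).2⟩
  · obtain ⟨δ, hδ, h⟩ := key Aᶜ hA
    refine ⟨δ, hδ, fun α h₁ h₂ => ?_⟩
    have := eqStar_image_inter_of_finite_sdiff (h α h₁ h₂).1 (h α h₁ h₂).2
    rwa [sdiff_compl, ← sdiff_eq, and_comm] at this

theorem infinite_sdiff_of_eqStar_compl {D D' B B' : Set ℕ} (hD : EqStar D Bᶜ)
    (hD' : EqStar D' B'ᶜ) (hB : (B \ B').Infinite) : (D' \ D).Infinite := fun h =>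
  hB (by simpa only [compl_sdiff_compl] using (hD'.sdiff hD).symm.finite h)

section Base

variable {Bse : Ordinal → Set ℕ}

theorem subStar_of_eqStar_compl_of_le
    (hdec : ∀ α β, α < β → β < omega1 → SubStar (Bse β) (Bse α) ∧ (Bse α \ Bse β).Infinite)
    {β γ : Ordinal} (h : β ≤ γ) (hγ : γ < omega1) {D D' : Set ℕ} (hD : EqStar D (Bse β)ᶜ)
    (hD' : EqStar D' (Bse γ)ᶜ) : SubStar D D' := by
  refine (hD.sdiff hD').finite ?_
  rw [compl_sdiff_compl]
  exact h.eq_or_lt.elim (fun h => by simp [h]) fun h => (hdec β γ h hγ).1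

theorem exists_coherent_extension
    (hdec : ∀ α β, α < β → β < omega1 → SubStar (Bse β) (Bse α) ∧ (Bse α \ Bse β).Infinite)
    {α : Ordinal} (hα : α < omega1) (s : Ordinal → Set ℕ × (ℕ → ℕ))
    (hs : ∀ β < α, EqStar (s β).1 (Bse β)ᶜ ∧ IsFPFInvolOn (s β).2 (s β).1)
    (hcoh : ∀ β γ, β ≤ γ → γ < α → AlmostEqOn (s β).2 (s γ).2 (s β).1) :
    ∃ p : Set ℕ × (ℕ → ℕ), (EqStar p.1 (Bse α)ᶜ ∧ IsFPFInvolOn p.2 p.1) ∧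
      ∀ β < α, AlmostEqOn (s β).2 p.2 (s β).1 := by
  rcases eq_or_ne α 0 with rfl | hα0
  · obtain ⟨D, hD, hfin, f, hf⟩ := exists_isFPFInvolOn_cofinite_subset (Bse 0)ᶜ
    exact ⟨(D, f), ⟨EqStar.of_subset hD hfin, hf⟩, fun β hβ => (hβ.not_ge zero_le).elim⟩
  obtain ⟨c, hc_mono, hc_lt, hc_cof⟩ := exists_monotone_cofinal_of_lt_omega1 hα hα0
  obtain ⟨D, hD, hfin, f, hf, hfc⟩ := exists_isFPFInvolOn_amalgamation (Bse α)ᶜ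
    (fun n => (s (c n)).1) (fun n => (s (c n)).2)
    (fun n => subStar_of_eqStar_compl_of_le hdec (hc_lt n).le hα (hs _ (hc_lt n)).1 (.refl _))
    (fun n => (hs _ (hc_lt n)).2) (fun m n h => hcoh _ _ (hc_mono h) (hc_lt n))
  refine ⟨(D, f), ⟨EqStar.of_subset hD hfin, hf⟩, fun β hβ => ?_⟩
  obtain ⟨n, hn⟩ := hc_cof β hβ
  exact (hcoh β _ hn (hc_lt n)).trans ((hfc n).of_subStar (subStar_of_eqStar_compl_of_le hdec hn
    ((hc_lt n).trans hα) (hs β hβ).1 (hs _ (hc_lt n)).1))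

theorem exists_bowtieInv_of_base (u : Ultrafilter ℕ)
    (hdec : ∀ α β, α < β → β < omega1 → SubStar (Bse β) (Bse α) ∧ (Bse α \ Bse β).Infinite)
    (hbase : ∀ A : Set ℕ, A ∈ u → ∃ α < omega1, SubStar (Bse α) A) :
    ∃ B : BowtieInv, ∀ α < omega1, EqStar (B.D α) (Bse α)ᶜ := by
  obtain ⟨s, hs, hcoh⟩ := exists_seq_of_forall_extend omega1
    (fun α p => EqStar p.1 (Bse α)ᶜ ∧ IsFPFInvolOn p.2 p.1) (fun p q => AlmostEqOn p.2 q.2 p.1)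
    (fun p => AlmostEqOn.refl p.2 p.1) fun α hα s hQ hR => exists_coherent_extension hdec hα s hQ hR
  have hsub : ∀ β α, β ≤ α → α < omega1 → SubStar (s β).1 (s α).1 := fun β α h hα =>
    subStar_of_eqStar_compl_of_le hdec h hα (hs β (h.trans_lt hα)).1 (hs α hα).1
  exact ⟨{ D := fun α => (s α).1
           f := fun α => (s α).2
           bijOn := fun α hα => (hs α hα).2.bijOn
           fixedPointFree := fun α hα x hx => ((hs α hα).2 x hx).2.2
           sub := fun β α h hα => hsub β α h.le hα
           diff_infinite := fun β α h hα =>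
             infinite_sdiff_of_eqStar_compl (hs β (h.trans hα)).1 (hs α hα).1 (hdec β α h hα).2
           coherent := hcoh
           guess := guess_of_base u hbase (fun α hα => (hs α hα).1)
             (fun α hα => (hs α hα).2.bijOn) hsub hcoh
           invol := fun α hα x hx => ((hs α hα).2 x hx).2.1 }, fun α hα => (hs α hα).1⟩

end Base

/-- Greedily add points of `T` whose images avoid the images of the points chosen so far. -/
theorem exists_infinite_disjoint_image {g₁ g₂ : ℕ → ℕ} {T : Set ℕ} (hT : T.Infinite)
    (h₁ : InjOn g₁ T) (h₂ : InjOn g₂ T) (hne : ∀ x ∈ T, g₁ x ≠ g₂ x) :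
    ∃ S ⊆ T, S.Infinite ∧ Disjoint (g₁ '' S) (g₂ '' S) := by
  have hpre : ∀ {g : ℕ → ℕ}, InjOn g T → ∀ F : Set ℕ, F.Finite → {y ∈ T | g y ∈ F}.Finite :=
    fun hg F hF => Finite.of_finite_image (hF.subset (image_subset_iff.2 fun _ hy => hy.2))
      (hg.mono fun _ hy => hy.1)
  obtain ⟨c, hcT, hc⟩ := exists_seq_of_forall_finset_exists (· ∈ T)
    (fun x y => x ≠ y ∧ g₁ x ≠ g₂ y ∧ g₁ y ≠ g₂ x) fun s _ => by
      have hF := (s.finite_toSet.union (hpre h₂ _ (s.finite_toSet.image g₁))).union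
        (hpre h₁ _ (s.finite_toSet.image g₂))
      obtain ⟨y, hyT, hy⟩ := (hT.sdiff hF).nonempty
      refine ⟨y, hyT, fun x hx =>
        ⟨fun h => hy (Or.inl (Or.inl (h ▸ hx))), fun h => ?_, fun h => ?_⟩⟩
      exacts [hy (Or.inl (Or.inr ⟨hyT, x, hx, h⟩)), hy (Or.inr ⟨hyT, x, hx, h.symm⟩)]
  have hinj : Injective c := fun m n hmn => by
    by_contra h
    rcases lt_or_gt_of_ne h with h | h
    exacts [(hc m n h).1 hmn, (hc n m h).1 hmn.symm]
  refine ⟨range c, range_subset_iff.2 hcT, infinite_range_of_injective hinj, ?_⟩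
  rw [disjoint_left]
  rintro _ ⟨_, ⟨m, rfl⟩, rfl⟩ ⟨_, ⟨n, rfl⟩, hmn⟩
  rcases lt_trichotomy m n with h | rfl | h
  exacts [(hc m n h).2.1 hmn.symm, hne _ (hcT m) hmn.symm, (hc n m h).2.2 hmn.symm]

theorem almostEqOn_of_forall_eqStar_image {g₁ g₂ : ℕ → ℕ} {T : Set ℕ} (h₁ : InjOn g₁ T)
    (h₂ : InjOn g₂ T) (h : ∀ S ⊆ T, EqStar (g₁ '' S) (g₂ '' S)) : AlmostEqOn g₁ g₂ T := by
  by_contra hinf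
  obtain ⟨S, hS, hSinf, hdisj⟩ := exists_infinite_disjoint_image hinf
    (h₁.mono fun _ hx => hx.1) (h₂.mono fun _ hx => hx.1) fun _ hx => hx.2
  have hST : S ⊆ T := hS.trans fun _ hx => hx.1
  exact hSinf (((h S hST).finite_of_disjoint hdisj).of_finite_image (h₁.mono hST))

/-- Splitting by `x < f x` separates every pair `{y, f y}`. -/
theorem finite_of_eqStar_image_inter_lt {f : ℕ → ℕ} {Y : Set ℕ}
    (hf : ∀ y ∈ Y, f (f y) = y ∧ f y ≠ y)
    (h₁ : EqStar (f '' (Y ∩ {x | x < f x})) (Y ∩ {x | x < f x}))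
    (h₂ : EqStar (f '' (Y \ {x | x < f x})) (Y \ {x | x < f x})) : Y.Finite := by
  have d₁ : Disjoint (Y ∩ {x | x < f x}) (f '' (Y ∩ {x | x < f x})) := by
    rw [disjoint_right]
    rintro _ ⟨y, ⟨hy, hlt⟩, rfl⟩ ⟨-, hlt'⟩
    have := (hf y hy).1
    simp only [mem_ofPred_eq] at hlt hlt'
    omega
  have d₂ : Disjoint (Y \ {x | x < f x}) (f '' (Y \ {x | x < f x})) := by
    rw [disjoint_right]
    rintro _ ⟨y, ⟨hy, hlt⟩, rfl⟩ ⟨-, hlt'⟩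
    have := hf y hy
    simp only [mem_ofPred_eq] at hlt hlt'
    omega
  rw [← inter_union_sdiff Y {x | x < f x}]
  exact (h₁.symm.finite_of_disjoint d₁).union (h₂.symm.finite_of_disjoint d₂)

theorem exists_eventually_forall_finset {ι : Type*} [LinearOrder ι] {o : ι} {P : Set ℕ → ι → Prop}
    (hP : ∀ A, ∃ δ < o, ∀ γ, δ ≤ γ → γ < o → P A γ) (s : Finset (Set ℕ)) :
    ∃ γ < o, ∀ A ∈ s, P A γ := by
  suffices ∃ δ < o, ∀ γ, δ ≤ γ → γ < o → ∀ A ∈ s, P A γ by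
    obtain ⟨δ, hδ, h⟩ := this
    exact ⟨δ, hδ, h δ le_rfl hδ⟩
  induction s using Finset.induction_on with
  | empty => obtain ⟨δ, hδ, -⟩ := hP ∅; exact ⟨δ, hδ, by simp⟩
  | insert A s _ ih =>
    obtain ⟨δ, hδ, hs⟩ := ih
    obtain ⟨δA, hδA, hA⟩ := hP A
    refine ⟨max δ δA, max_lt hδ hδA, fun γ hγ hγo => (Finset.forall_mem_insert _ _ _).2
      ⟨hA γ (le_of_max_le_right hγ) hγo, hs γ (le_of_max_le_left hγ) hγo⟩⟩

def PωFinAuto.ofEventuallyEqStarImage {ι : Type*} [LinearOrder ι] (o : ι) (σ : ι → ℕ → ℕ)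
    (hσ : ∀ γ < o, Involutive (σ γ)) (Φ : Set ℕ → Set ℕ)
    (hΦ : ∀ A, ∃ δ < o, ∀ γ, δ ≤ γ → γ < o → EqStar (Φ A) (σ γ '' A)) : PωFinAuto where
  Φ := Φ
  congr A B h := by
    obtain ⟨γ, -, hγ⟩ := exists_eventually_forall_finset hΦ {A, B}
    exact ((hγ A (by simp)).trans (h.image _)).trans (hγ B (by simp)).symm
  inj A B h := by
    obtain ⟨γ, hγo, hγ⟩ := exists_eventually_forall_finset hΦ {A, B}
    exact EqStar.of_image (hσ γ hγo).injective
      (((hγ A (by simp)).symm.trans h).trans (hγ B (by simp)))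
  surj B := by
    obtain ⟨γ, hγo, hγ⟩ := exists_eventually_forall_finset hΦ {Φ B, B}
    have h := (hγ B (by simp)).image (σ γ)
    rw [image_image, funext (hσ γ hγo), image_id'] at h
    exact ⟨Φ B, (hγ (Φ B) (by simp)).trans h⟩
  map_union A B := by
    obtain ⟨γ, -, hγ⟩ := exists_eventually_forall_finset hΦ {A, B, A ∪ B}
    refine (hγ (A ∪ B) (by simp)).trans ?_
    rw [image_union]
    exact ((hγ A (by simp)).union (hγ B (by simp))).symm
  map_compl A := by
    obtain ⟨γ, hγo, hγ⟩ := exists_eventually_forall_finset hΦ {A, Aᶜ}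
    refine (hγ Aᶜ (by simp)).trans ?_
    rw [image_compl_eq (hσ γ hγo).bijective]
    exact (hγ A (by simp)).symm.compl

namespace BowtieFn

variable (B : BowtieFn)

open Classical in
noncomputable def perm (α : Ordinal) : ℕ → ℕ := (B.D α).piecewise (B.f α) id

noncomputable def autoMap (A : Set ℕ) : Set ℕ := B.perm (B.guess A).choose '' A

variable {B}

theorem perm_of_mem {α : Ordinal} {x : ℕ} (hx : x ∈ B.D α) : B.perm α x = B.f α x := by
  simp [perm, hx]

theorem perm_of_notMem {α : Ordinal} {x : ℕ} (hx : x ∉ B.D α) : B.perm α x = x := by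
  simp [perm, hx]

variable (B)

theorem subStar_of_le {β α : Ordinal} (h : β ≤ α) (hα : α < omega1) : SubStar (B.D β) (B.D α) :=
  h.eq_or_lt.elim (fun h => h ▸ by simp [SubStar]) fun h => B.sub β α h hα

theorem almostEqOn_perm {β α : Ordinal} (h : β ≤ α) (hα : α < omega1) :
    AlmostEqOn (B.f β) (B.perm α) (B.D β) := by
  refine ((B.subStar_of_le h hα).union (B.coherent β α h hα)).subset fun x ⟨hx, hne⟩ => ?_
  by_cases hxα : x ∈ B.D α
  · exact Or.inr ⟨hx, perm_of_mem hxα ▸ hne⟩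
  · exact Or.inl ⟨hx, hxα⟩

/-- Between stages `δ ≤ α` the two permutations differ, up to finitely many points, only on
`D_α \ D_δ`; there `perm δ` is the identity and `perm α` almost preserves `A` by (iii). -/
theorem eqStar_image_perm {δ α : Ordinal} (h : δ ≤ α) (hα : α < omega1) {A : Set ℕ}
    (hA : EqStar (B.f α '' ((B.D α \ B.D δ) ∩ A)) ((B.D α \ B.D δ) ∩ A)) :
    EqStar (B.perm δ '' A) (B.perm α '' A) := by
  set Y := B.D α \ B.D δ
  have hout : AlmostEqOn (B.perm δ) (B.perm α) (A \ Y) :=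
    (B.almostEqOn_perm h hα).subset fun x ⟨⟨_, hxY⟩, hne⟩ => by
      by_cases hxδ : x ∈ B.D δ
      · exact ⟨hxδ, perm_of_mem hxδ ▸ hne⟩
      · have hxα : x ∉ B.D α := fun hxα => hxY ⟨hxα, hxδ⟩
        exact absurd ((perm_of_notMem hxδ).trans (perm_of_notMem hxα).symm) hne
  have hδ : B.perm δ '' (Y ∩ A) = Y ∩ A :=
    (EqOn.image_eq fun _ hx => perm_of_notMem hx.1.2).trans (image_id _)
  have hα' : B.perm α '' (Y ∩ A) = B.f α '' (Y ∩ A) :=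
    EqOn.image_eq fun _ hx => perm_of_mem hx.1.1
  rw [← sdiff_union_inter A Y, image_union, image_union, inter_comm A Y, hδ, hα']
  exact hout.eqStar_image.union hA.symm

theorem eventually_eqStar_autoMap (A : Set ℕ) :
    ∃ δ < omega1, ∀ α, δ ≤ α → α < omega1 → EqStar (B.autoMap A) (B.perm α '' A) :=
  have h := (B.guess A).choose_spec
  ⟨_, h.1, fun α h₁ h₂ => B.eqStar_image_perm h₁ h₂ (h.2 α h₁ h₂).1⟩

theorem almostEqOn_of_eqStar_image {Φ : Set ℕ → Set ℕ}
    (hΦ : ∀ A, ∃ δ < omega1, ∀ α, δ ≤ α → α < omega1 → EqStar (Φ A) (B.perm α '' A))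
    {h : ℕ → ℕ} {dom : Set ℕ} (hdom : domᶜ.Finite) (hinj : InjOn h dom)
    (hΦh : ∀ A, EqStar (Φ A) (h '' (A ∩ dom))) {α : Ordinal} (hα : α < omega1) :
    AlmostEqOn (B.f α) h (B.D α) := by
  refine (almostEqOn_of_forall_eqStar_image ((B.bijOn α hα).injOn.mono inter_subset_left)
    (hinj.mono inter_subset_right) fun S hS => ?_).of_subStar
    (hdom.subset fun x ⟨hx, hxS⟩ hxd => hxS ⟨hx, hxd⟩)
  obtain ⟨δ, hδ, hΦS⟩ := hΦ S
  have hγ := max_lt hα hδ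
  refine ((B.almostEqOn_perm (le_max_left α δ) hγ).mono (hS.trans inter_subset_left)
    |>.eqStar_image.trans ((hΦS _ (le_max_right α δ) hγ).symm.trans ?_))
  simpa only [inter_eq_left.2 (hS.trans inter_subset_right)] using hΦh S

end BowtieFn

namespace BowtieInv

theorem involutive_perm (B : BowtieInv) {α : Ordinal} (hα : α < omega1) :
    Involutive (B.perm α) := fun x => by
  by_cases hx : x ∈ B.D α
  · rw [BowtieFn.perm_of_mem hx, BowtieFn.perm_of_mem ((B.bijOn α hα).mapsTo hx),
      B.invol α hα x hx]
  · rw [BowtieFn.perm_of_notMem hx, BowtieFn.perm_of_notMem hx]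

theorem not_isTrivial (B : BowtieInv) {Φ : Set ℕ → Set ℕ}
    (hΦ : ∀ A, ∃ δ < omega1, ∀ α, δ ≤ α → α < omega1 → EqStar (Φ A) (B.perm α '' A)) :
    ¬ IsTrivial Φ := by
  rintro ⟨h, dom, hdom, -, hinj, hΦh⟩
  obtain ⟨δ, hδ, hguess⟩ := B.guess {x | x < h x}
  have hα := succ_lt_omega1 hδ
  obtain ⟨h₁, h₂⟩ := hguess _ (Order.le_succ δ) hα
  have hY := ((B.almostEqOn_of_eqStar_image hΦ hdom hinj hΦh hα).mono
    (sdiff_subset (t := B.D δ))).eqStar_inter_lt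
  refine B.diff_infinite δ _ (Order.lt_succ δ) hα (finite_of_eqStar_image_inter_lt
    (fun y hy => ⟨B.invol _ hα y hy.1, B.fixedPointFree _ hα y hy.1⟩)
    (hY.symm.image_self_of_eqStar h₁) (EqStar.image_self_of_eqStar ?_ h₂))
  rw [← sdiff_self_inter, ← sdiff_self_inter (t := {x | x < B.f _ x})]
  exact (EqStar.refl _).sdiff hY.symm

theorem exists_nontrivial_auto (B : BowtieInv) : ∃ F : PωFinAuto, ¬ IsTrivial F.Φ :=
  ⟨.ofEventuallyEqStarImage omega1 B.perm (fun _ => B.involutive_perm) B.autoMap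
    B.eventually_eqStar_autoMap, B.not_isTrivial B.eventually_eqStar_autoMap⟩

end BowtieInv

theorem pPoint_base_gives_bowtie_of_involutions_general (u : Ultrafilter ℕ)
    (Bse : Ordinal → Set ℕ)
    (hdec : ∀ α β, α < β → β < omega1 →
      SubStar (Bse β) (Bse α) ∧ (Bse α \ Bse β).Infinite)
    (hbase : ∀ A : Set ℕ, A ∈ u → ∃ α < omega1, SubStar (Bse α) A) :
    (∃ B : BowtieInv, ∀ α < omega1, EqStar (B.D α) (Bse α)ᶜ) ∧
    ∃ F : PωFinAuto, ¬ IsTrivial F.Φ := by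
  obtain ⟨B, hB⟩ := exists_bowtieInv_of_base u hdec hbase
  exact ⟨⟨B, hB⟩, B.exists_nontrivial_auto⟩

/-- if `u` is an ultrafilter with a strictly `⊆*`-decreasing
base `⟨B_α : α < ω₁⟩`, then there is a bowtie of involutions whose domains
satisfy `D_α =* ℕ \ B_α`; consequently (the existence of a P-point of
character `ℵ₁` implies) there is a nontrivial automorphism of `P(ω)/Fin`. -/
theorem pPoint_base_gives_bowtie_of_involutions (u : Ultrafilter ℕ)
    (Bse : Ordinal → Set ℕ)
    (hmem : ∀ α < omega1, Bse α ∈ u)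
    (hdec : ∀ α β, α < β → β < omega1 →
      SubStar (Bse β) (Bse α) ∧ (Bse α \ Bse β).Infinite)
    (hbase : ∀ A : Set ℕ, A ∈ u → ∃ α < omega1, SubStar (Bse α) A) :
    (∃ B : BowtieInv, ∀ α < omega1, EqStar (B.D α) (Bse α)ᶜ) ∧
    ∃ F : PωFinAuto, ¬ IsTrivial F.Φ :=
  pPoint_base_gives_bowtie_of_involutions_general u Bse hdec hbase
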